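/- Conditional unbiasedness of the rATE score: suppose unconfoundedness holds at every t ∈ {0,…,J}, let π_1,…,π_J be positive reals, and let c_0, c_1, …, c_J be arbitrary reals (outcome-model plug-ins). Then E[ Σ_{t=1}^J (π_t / Σ_{s=1}^J π_s)·( c_t + 1{T = t}·(Y − c_t)/e_t ) − ( c_0 + 1{T = 0}·(Y − c_0)/e_0 ) | A ] = Σ_{t=1}^J (π_t / Σ_{s=1}^J π_s)·(m_t − m_0). -/

import Mathlib

open MeasureTheory ProbabilityTheory
open scoped ENNReal

/-!
Inverse probability weighting: on the event `{T = t}` the observed outcome is `Y_t`, and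
`E[1_S f | A] = P(S | A) · E[f | A ∩ S]`, so dividing by `e_t = P(T = t | A)` turns
`E[1{T = t} (Y - c_t) | A]` into `E[Y_t - c_t | A ∩ {T = t}] = μ̄_t - c_t`. Hence every
augmented score `c_t + 1{T = t}(Y - c_t)/e_t` has conditional mean `μ̄_t`, which is `m_t` by
unconfoundedness, whatever the plug-in `c_t`; the weights `π_t / Σ π_s` sum to one, so the
weighted contrast has mean `Σ_t (π_t / Σ π_s)(m_t - m_0)`.
-/

section

variable {Ω E : Type*} [MeasurableSpace Ω] [NormedAddCommGroup E] {μ : Measure Ω} {s t : Set Ω}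

lemma cond_cond_eq_cond_inter_of_measurableSet (hmt : MeasurableSet t) (hcs : μ s ≠ ∞) :
    μ[|s][|t] = μ[|s ∩ t] := by
  ext u hmu
  obtain hst | hst := eq_or_ne (μ (s ∩ t)) 0
  · have : μ (s ∩ t ∩ u) = 0 := measure_mono_null Set.inter_subset_left hst
    simp [cond_apply', *, hmt.inter hmu, ← Set.inter_assoc]
  · have hs : μ s ≠ 0 := (measure_pos_of_superset Set.inter_subset_left hst).ne'
    simp [*, hmt.inter hmu, cond_apply', ← Set.inter_assoc, ENNReal.mul_inv, ← mul_assoc,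
      mul_comm _ (μ s)⁻¹, ENNReal.inv_mul_cancel]

lemma MeasureTheory.Integrable.cond {f : Ω → E} (hf : Integrable f μ) (s : Set Ω) :
    Integrable f μ[|s] := by
  obtain hs | hs := eq_or_ne (μ s) 0
  · simp [ProbabilityTheory.cond, Measure.restrict_eq_zero.2 hs]
  · exact hf.restrict.smul_measure (ENNReal.inv_ne_top.2 hs)

variable [NormedSpace ℝ E]

lemma setIntegral_eq_measureReal_smul_integral_cond [IsFiniteMeasure μ] (f : Ω → E) :
    ∫ x in s, f x ∂μ = μ.real s • ∫ x, f x ∂μ[|s] := by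
  obtain hs | hs := eq_or_ne (μ s) 0
  · simp [Measure.restrict_eq_zero.2 hs, ProbabilityTheory.cond]
  · rw [ProbabilityTheory.cond, integral_smul_measure, smul_smul, measureReal_def,
      ENNReal.toReal_inv, mul_inv_cancel₀ (ENNReal.toReal_ne_zero.2 ⟨hs, measure_ne_top μ s⟩),
      one_smul]

lemma integral_indicator_sub_div_measureReal [IsFiniteMeasure μ] (hs : MeasurableSet s)
    (hμs : μ s ≠ 0) {f : Ω → ℝ} (hf : Integrable f μ) (c : ℝ) :
    ∫ x, s.indicator (fun x ↦ (f x - c) / μ.real s) x ∂μ = ∫ x, f x ∂μ[|s] - c := by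
  have := cond_isProbabilityMeasure (μ := μ) hμs
  have hμs' : μ.real s ≠ 0 := (measureReal_ne_zero_iff (measure_ne_top μ s)).2 hμs
  rw [integral_indicator hs, setIntegral_eq_measureReal_smul_integral_cond, integral_div,
    integral_sub (hf.cond s) (integrable_const c), integral_const, probReal_univ, one_smul,
    smul_eq_mul, mul_div_cancel₀ _ hμs']

lemma integral_sum_mul_sub_of_sum_eq_one {ι : Type*} {s : Finset ι} {w : ι → ℝ}
    (hw : ∑ i ∈ s, w i = 1) {X : ι → Ω → ℝ} {X₀ : Ω → ℝ} (hX : ∀ i ∈ s, Integrable (X i) μ)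
    (hX₀ : Integrable X₀ μ) :
    ∫ x, (∑ i ∈ s, w i * X i x) - X₀ x ∂μ = ∑ i ∈ s, w i * (∫ x, X i x ∂μ - ∫ x, X₀ x ∂μ) := by
  have hwX : ∀ i ∈ s, Integrable (fun x ↦ w i * X i x) μ := fun i hi ↦ (hX i hi).const_mul _
  rw [integral_sub (integrable_finsetSum _ hwX) hX₀, integral_finsetSum _ hwX]
  simp_rw [integral_const_mul, mul_sub, Finset.sum_sub_distrib, ← Finset.sum_mul, hw, one_mul]

end

section

variable {Ω ι : Type*} [DecidableEq ι] {T : Ω → ι} {Yobs Y : Ω → ℝ} {t : ι}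

noncomputable def aipwScore (T : Ω → ι) (Yobs : Ω → ℝ) (t : ι) (e c : ℝ) (ω : Ω) : ℝ :=
  c + (if T ω = t then 1 else 0) * (Yobs ω - c) / e

lemma aipwScore_eq_add_indicator (hY : ∀ ω, T ω = t → Yobs ω = Y ω) (e c : ℝ) :
    aipwScore T Yobs t e c = fun ω ↦ c + {ω | T ω = t}.indicator (fun ω ↦ (Y ω - c) / e) ω := by
  ext ω
  by_cases h : T ω = t
  · simp [aipwScore, h, hY ω h]
  · simp [aipwScore, h]

variable [MeasurableSpace Ω] {μ : Measure Ω}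

lemma integrable_aipwScore [IsFiniteMeasure μ] (hS : MeasurableSet {ω | T ω = t})
    (hY : ∀ ω, T ω = t → Yobs ω = Y ω) (hYint : Integrable Y μ) (e c : ℝ) :
    Integrable (aipwScore T Yobs t e c) μ := by
  rw [aipwScore_eq_add_indicator hY]
  exact (integrable_const c).add (((hYint.sub (integrable_const c)).div_const e).indicator hS)

lemma integral_aipwScore [IsProbabilityMeasure μ] (hS : MeasurableSet {ω | T ω = t})
    (hμS : μ {ω | T ω = t} ≠ 0) (hY : ∀ ω, T ω = t → Yobs ω = Y ω) (hYint : Integrable Y μ)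
    (c : ℝ) :
    ∫ ω, aipwScore T Yobs t (μ.real {ω | T ω = t}) c ω ∂μ = ∫ ω, Y ω ∂μ[|{ω | T ω = t}] := by
  have hind : Integrable ({ω | T ω = t}.indicator fun ω ↦ (Y ω - c) / μ.real {ω | T ω = t}) μ :=
    ((hYint.sub (integrable_const c)).div_const _).indicator hS
  simp_rw [aipwScore_eq_add_indicator hY]
  rw [integral_add (integrable_const c) hind,
    integral_indicator_sub_div_measureReal hS hμS hYint, integral_const, probReal_univ, one_smul]
  ring

end

theorem rATE_score_conditionally_unbiased_general
    {Ω : Type*} [MeasurableSpace Ω] (P : Measure Ω) [IsProbabilityMeasure P]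
    (J : ℕ) (hJ : 1 ≤ J)
    (T : Ω → ℕ) (hT : Measurable T) (hTle : ∀ ω, T ω ≤ J)
    (Y : ℕ → Ω → ℝ) (hYint : ∀ t, Integrable (Y t) P)
    (A : Set Ω)
    (hpos : ∀ t ≤ J, 0 < P (A ∩ {ω | T ω = t}))
    (Yobs : Ω → ℝ)
    (hYobs : ∀ ω, Yobs ω = ∑ t ∈ Finset.range (J + 1), if T ω = t then Y t ω else 0)
    (e : ℕ → ℝ) (he : ∀ t, e t = ((P[|A]) {ω | T ω = t}).toReal)
    (m : ℕ → ℝ)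
    (μbar : ℕ → ℝ)
    (hμbar : ∀ t, μbar t = ∫ ω, Y t ω ∂(P[|(A ∩ {ω | T ω = t})]))
    (hunconf : ∀ t ≤ J, μbar t = m t)
    (πv : ℕ → ℝ) (hπpos : ∀ t ∈ Finset.Icc 1 J, 0 < πv t)
    (c : ℕ → ℝ) :
    ∫ ω, ((∑ t ∈ Finset.Icc 1 J, (πv t / (∑ s ∈ Finset.Icc 1 J, πv s)) *
            (c t + (if T ω = t then (1 : ℝ) else 0) * (Yobs ω - c t) / e t))
          - (c 0 + (if T ω = 0 then (1 : ℝ) else 0) * (Yobs ω - c 0) / e 0)) ∂(P[|A])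
      = ∑ t ∈ Finset.Icc 1 J, (πv t / (∑ s ∈ Finset.Icc 1 J, πv s)) * (m t - m 0) := by
  have hA0 : P A ≠ 0 := fun h ↦ (hpos 0 J.zero_le).ne' (measure_mono_null Set.inter_subset_left h)
  have := cond_isProbabilityMeasure (μ := P) hA0
  have hS (t : ℕ) : MeasurableSet {ω | T ω = t} := hT (measurableSet_singleton t)
  have hYobs_eq (t : ℕ) (ω : Ω) (h : T ω = t) : Yobs ω = Y t ω := by
    rw [hYobs, Finset.sum_ite_eq, if_pos (Finset.mem_range.2 (Nat.lt_succ_of_le (hTle ω))), h]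
  have hint (t : ℕ) : Integrable (aipwScore T Yobs t (e t) (c t)) P[|A] :=
    integrable_aipwScore (hS t) (hYobs_eq t) ((hYint t).cond A) _ _
  have hmean (t : ℕ) (ht : t ≤ J) : ∫ ω, aipwScore T Yobs t (e t) (c t) ω ∂P[|A] = m t := by
    have hνS : P[|A] {ω | T ω = t} ≠ 0 := by
      rw [cond_apply' (hS t)]
      exact mul_ne_zero (ENNReal.inv_ne_zero.2 (measure_ne_top P A)) (hpos t ht).ne'
    rw [← hunconf t ht, hμbar, ← cond_cond_eq_cond_inter_of_measurableSet (hS t)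
      (measure_ne_top P A), he t]
    exact integral_aipwScore (hS t) hνS (hYobs_eq t) ((hYint t).cond A) (c t)
  have hw : ∑ t ∈ Finset.Icc 1 J, πv t / ∑ s ∈ Finset.Icc 1 J, πv s = 1 := by
    rw [← Finset.sum_div, div_self (Finset.sum_pos hπpos ⟨1, by simp [hJ]⟩).ne']
  change ∫ ω, (∑ t ∈ Finset.Icc 1 J, πv t / (∑ s ∈ Finset.Icc 1 J, πv s) *
      aipwScore T Yobs t (e t) (c t) ω) - aipwScore T Yobs 0 (e 0) (c 0) ω ∂P[|A] = _
  rw [integral_sum_mul_sub_of_sum_eq_one hw (fun t _ ↦ hint t) (hint 0)]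
  refine Finset.sum_congr rfl fun t ht ↦ ?_
  rw [hmean t (Finset.mem_Icc.1 ht).2, hmean 0 J.zero_le]

/-- Conditional unbiasedness of the rATE score: for positive weights
`π_1,…,π_J` and arbitrary outcome-model plug-ins `c_0,…,c_J`,
`E[Σ_{t=1}^J (π_t/Σπ)·(c_t + 1{T=t}(Y − c_t)/e_t) − (c_0 + 1{T=0}(Y − c_0)/e_0) | A]
 = Σ_{t=1}^J (π_t/Σπ)·(m_t − m_0)`, under unconfoundedness at every `t ∈ {0,…,J}`. -/
theorem rATE_score_conditionally_unbiased
    {Ω : Type*} [MeasurableSpace Ω] (P : Measure Ω) [IsProbabilityMeasure P]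
    (J : ℕ) (hJ : 1 ≤ J)
    (T : Ω → ℕ) (hT : Measurable T) (hTle : ∀ ω, T ω ≤ J)
    (Y : ℕ → Ω → ℝ) (hYmeas : ∀ t, Measurable (Y t)) (hYint : ∀ t, Integrable (Y t) P)
    (A : Set Ω) (hA : MeasurableSet A)
    (hpos : ∀ t ≤ J, 0 < P (A ∩ {ω | T ω = t}))
    (Yobs : Ω → ℝ)
    (hYobs : ∀ ω, Yobs ω = ∑ t ∈ Finset.range (J + 1), if T ω = t then Y t ω else 0)
    (e : ℕ → ℝ) (he : ∀ t, e t = ((P[|A]) {ω | T ω = t}).toReal)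
    (m : ℕ → ℝ) (hm : ∀ t, m t = ∫ ω, Y t ω ∂(P[|A]))
    (μbar : ℕ → ℝ)
    (hμbar : ∀ t, μbar t = ∫ ω, Y t ω ∂(P[|(A ∩ {ω | T ω = t})]))
    (hunconf : ∀ t ≤ J, μbar t = m t)
    (πv : ℕ → ℝ) (hπpos : ∀ t ∈ Finset.Icc 1 J, 0 < πv t)
    (c : ℕ → ℝ) :
    ∫ ω, ((∑ t ∈ Finset.Icc 1 J, (πv t / (∑ s ∈ Finset.Icc 1 J, πv s)) *
            (c t + (if T ω = t then (1 : ℝ) else 0) * (Yobs ω - c t) / e t))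
          - (c 0 + (if T ω = 0 then (1 : ℝ) else 0) * (Yobs ω - c 0) / e 0)) ∂(P[|A])
      = ∑ t ∈ Finset.Icc 1 J, (πv t / (∑ s ∈ Finset.Icc 1 J, πv s)) * (m t - m 0) :=
  rATE_score_conditionally_unbiased_general P J hJ T hT hTle Y hYint A hpos Yobs hYobs e he m μbar
    hμbar hunconf πv hπpos c
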